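/- arXiv:1106.0873 — 2 statements merged into one kernel-verified Lean document; each statement's English description precedes it below -/
import Mathlib

section
/- Let f : ℝ² → ℝ be a smooth function which is 2π-periodic in its second variable, let k be a natural number, and suppose there is a constant C > 0 such that |∂_θ^{k+1} ∂_x^k f(x,θ)| ≤ C·x^{k+1} for all x ∈ (0,1) and all θ ∈ ℝ. Then the function θ ↦ ∂_x^k f(0,θ) is constant. -/
open Set Filter Function

/-- Joint smoothness of `(x, θ) ↦ ∂_x^k f(x, θ)` for jointly smooth `f`. -/
lemma aux_joint_smooth (f : ℝ → ℝ → ℝ)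
    (hf : ContDiff ℝ ((⊤ : ℕ∞) : WithTop ℕ∞) (Function.uncurry f)) (k : ℕ) :
    ContDiff ℝ ((⊤ : ℕ∞) : WithTop ℕ∞)
      (fun p : ℝ × ℝ => iteratedDeriv k (fun s => f s p.2) p.1) := by
  induction k with
  | zero =>
    simpa only [iteratedDeriv_zero, Function.uncurry_def] using hf
  | succ k ih =>
    have h1 : (fun p : ℝ × ℝ => iteratedDeriv (k + 1) (fun s => f s p.2) p.1)
        = fun p : ℝ × ℝ =>
            fderiv ℝ (fun x => iteratedDeriv k (fun s => f s p.2) x) p.1 1 := by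
      funext p
      rw [iteratedDeriv_succ, ← fderiv_apply_one_eq_deriv]
    rw [h1]
    apply ContDiff.fderiv_apply
      (f := fun (p : ℝ × ℝ) (x : ℝ) => iteratedDeriv k (fun s => f s p.2) x)
      (g := fun p : ℝ × ℝ => p.1) (k := fun _ => (1 : ℝ))
    · exact ih.comp (contDiff_snd.prodMk (contDiff_snd.comp contDiff_fst))
    · exact contDiff_fst
    · exact contDiff_const
    · simp
  
/-- The derivative of a periodic function is periodic. -/
lemma aux_periodic_deriv (u : ℝ → ℝ) {T : ℝ} (hper : Function.Periodic u T) :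
    Function.Periodic (deriv u) T := by
  intro t
  have hu : u = fun s => u (s + T) := funext fun s => (hper s).symm
  conv_rhs => rw [hu]
  rw [deriv_comp_add_const]

/-- Bound on the derivative of a smooth periodic function from a bound
on a higher derivative. -/
lemma aux_periodic_deriv_bound (m : ℕ) :
    ∀ (u : ℝ → ℝ), ContDiff ℝ ((⊤ : ℕ∞) : WithTop ℕ∞) u → ∀ {T : ℝ}, 0 < T →
    Function.Periodic u T → ∀ {B : ℝ},
    (∀ t, |iteratedDeriv (m + 1) u t| ≤ B) → ∀ t, |deriv u t| ≤ T ^ m * B := by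
  induction m with
  | zero =>
    intro u _ T _ _ B hbd t
    simpa [iteratedDeriv_one] using hbd t
  | succ m ih =>
    intro u hu T hT hper B hbd t
    set v := deriv u with hv
    have huv := contDiff_infty_iff_deriv.mp hu
    have hBnn : 0 ≤ B := le_trans (abs_nonneg _) (hbd 0)
    have hvper : Function.Periodic v T := aux_periodic_deriv u hper
    have hbd' : ∀ s, |iteratedDeriv (m + 1) v s| ≤ B := by
      intro s
      have : iteratedDeriv (m + 1 + 1) u = iteratedDeriv (m + 1) v := by
        rw [iteratedDeriv_succ']
      simpa [← this] using hbd s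
    have hdv : ∀ s, |deriv v s| ≤ T ^ m * B := ih v huv.2 hT hvper hbd'
    -- Rolle: v has a zero
    have hu0T : u 0 = u T := by simpa using (hper 0).symm
    obtain ⟨c, _, hc⟩ := exists_deriv_eq_zero hT hu.continuous.continuousOn hu0T
    -- shift the zero near t
    set c' : ℝ := c + ↑⌊(t - c) / T⌋ * T with hc'
    have hvc' : v c' = 0 := by
      have h1 := (hvper.int_mul ⌊(t - c) / T⌋) c
      rw [hc', h1]
      exact hc
    have hdist : |t - c'| ≤ T := by
      rw [abs_le]
      constructor
      · have := Int.sub_floor_div_mul_nonneg (t - c) hT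
        have h2 : t - c' = (t - c) - ↑⌊(t - c) / T⌋ * T := by ring
        rw [h2]; linarith
      · have := Int.sub_floor_div_mul_lt (t - c) hT
        have h2 : t - c' = (t - c) - ↑⌊(t - c) / T⌋ * T := by ring
        rw [h2]; linarith
    have hvdiff : ∀ s ∈ (univ : Set ℝ), DifferentiableAt ℝ v s :=
      fun s _ => (huv.2.differentiable (by simp)) s
    have := Convex.norm_image_sub_le_of_norm_deriv_le hvdiff
      (fun s _ => hdv s) convex_univ (mem_univ c') (mem_univ t)
    rw [hvc', sub_zero, Real.norm_eq_abs, Real.norm_eq_abs] at this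
    calc |v t| ≤ T ^ m * B * |t - c'| := this
      _ ≤ T ^ m * B * T := by
          apply mul_le_mul_of_nonneg_left hdist
          positivity
      _ = T ^ (m + 1) * B := by ring

/-- Local-coordinate model of Proposition 2.13: if `f` is smooth, `2π`-periodic in the
second variable, and `|∂_θ^{k+1} ∂_x^k f(x,θ)| ≤ C x^{k+1}` for `x ∈ (0,1)`, then the
Taylor coefficient `θ ↦ ∂_x^k f(0,θ)` is constant along the circle fibre. -/
theorem stmt5 (f : ℝ → ℝ → ℝ) (hf : ContDiff ℝ (⊤ : ℕ∞) (Function.uncurry f))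
    (hper : ∀ x θ, f x (θ + 2 * Real.pi) = f x θ) (k : ℕ) (C : ℝ) (hC : 0 < C)
    (hbound : ∀ x ∈ Set.Ioo (0 : ℝ) 1, ∀ θ : ℝ,
      |iteratedDeriv (k + 1) (fun t => iteratedDeriv k (fun s => f s t) x) θ|
        ≤ C * x ^ (k + 1)) :
    ∀ θ₁ θ₂ : ℝ,
      iteratedDeriv k (fun s => f s θ₁) 0 = iteratedDeriv k (fun s => f s θ₂) 0 := by
  intro θ₁ θ₂
  have hf' : ContDiff ℝ ((⊤ : ℕ∞) : WithTop ℕ∞) (Function.uncurry f) := hf.of_le (by simp)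
  have hG := aux_joint_smooth f hf' k
  set G : ℝ × ℝ → ℝ := fun p => iteratedDeriv k (fun s => f s p.2) p.1 with hGdef
  have hT : (0 : ℝ) < 2 * Real.pi := by positivity
  -- oscillation bound for x ∈ (0,1)
  have key : ∀ x ∈ Set.Ioo (0 : ℝ) 1,
      |G (x, θ₁) - G (x, θ₂)| ≤ (2 * Real.pi) ^ k * (C * x ^ (k + 1)) * |θ₁ - θ₂| := by
    intro x hx
    set h : ℝ → ℝ := fun θ => G (x, θ) with hhdef
    have hh : ContDiff ℝ ((⊤ : ℕ∞) : WithTop ℕ∞) h :=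
      hG.comp (contDiff_const.prodMk contDiff_id)
    have hhper : Function.Periodic h (2 * Real.pi) := by
      intro θ
      simp only [hhdef, hGdef]
      congr 1
      funext s
      exact hper s θ
    have hhbd : ∀ θ, |iteratedDeriv (k + 1) h θ| ≤ C * x ^ (k + 1) := fun θ =>
      hbound x hx θ
    have hder : ∀ θ, |deriv h θ| ≤ (2 * Real.pi) ^ k * (C * x ^ (k + 1)) :=
      aux_periodic_deriv_bound k h hh hT hhper hhbd
    have hhdiff : ∀ s ∈ (univ : Set ℝ), DifferentiableAt ℝ h s :=
      fun s _ => (hh.differentiable (by simp)) s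
    have := Convex.norm_image_sub_le_of_norm_deriv_le hhdiff
      (fun s _ => hder s) convex_univ (mem_univ θ₂) (mem_univ θ₁)
    simpa [Real.norm_eq_abs] using this
  -- the difference as a function of x, continuous at 0
  set d : ℝ → ℝ := fun x => G (x, θ₁) - G (x, θ₂) with hddef
  have hdcont : Continuous d := by
    apply Continuous.sub
    · exact hG.continuous.comp (continuous_id.prodMk continuous_const)
    · exact hG.continuous.comp (continuous_id.prodMk continuous_const)
  have hne : (nhdsWithin (0 : ℝ) (Set.Ioo 0 1)).NeBot := by
    rw [← mem_closure_iff_nhdsWithin_neBot, closure_Ioo (by norm_num : (0:ℝ) ≠ 1)]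
    exact ⟨le_refl 0, by norm_num⟩
  have hlim1 : Tendsto d (nhdsWithin (0 : ℝ) (Set.Ioo 0 1)) (nhds (d 0)) :=
    (hdcont.tendsto 0).mono_left nhdsWithin_le_nhds
  have hlim2 : Tendsto d (nhdsWithin (0 : ℝ) (Set.Ioo 0 1)) (nhds 0) := by
    apply squeeze_zero_norm'
      (a := fun x => (2 * Real.pi) ^ k * (C * x ^ (k + 1)) * |θ₁ - θ₂|)
    · filter_upwards [self_mem_nhdsWithin] with x hx
      simpa [Real.norm_eq_abs] using key x hx
    · have : Continuous fun x : ℝ =>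
          (2 * Real.pi) ^ k * (C * x ^ (k + 1)) * |θ₁ - θ₂| := by continuity
      have h0 := (this.tendsto 0).mono_left
        (nhdsWithin_le_nhds (s := Set.Ioo (0:ℝ) 1))
      simpa using h0
  have hd0 : d 0 = 0 := tendsto_nhds_unique hlim1 hlim2
  have : G (0, θ₁) - G (0, θ₂) = 0 := hd0
  have h2 : G (0, θ₁) = G (0, θ₂) := by linarith
  exact h2
end

section
/- Let f : ℝ × ℝ → ℝ be a smooth function which is 2π-periodic in its second variable, and suppose that for every natural number k there is a constant C_k > 0 such that |∂_θ^k f(x,θ)| ≤ C_k·x^k for all x ∈ (0,1] and all θ ∈ ℝ. Define f_av(x) = (1/2π)·∫₀^{2π} f(x,θ) dθ. Then for every natural number N there is a constant C > 0 such that |f(x,θ) − f_av(x)| ≤ C·x^N for all x ∈ (0,1] and all θ ∈ ℝ. -/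
open Real Set intervalIntegral

private lemma periodic_deriv' {h : ℝ → ℝ} {p : ℝ} (hp : Function.Periodic h p) :
    Function.Periodic (deriv h) p := by
  intro t
  have h1 : deriv (fun y => h (y + p)) t = deriv h (t + p) := deriv_comp_add_const h p t
  rw [← h1]
  congr 1
  funext y
  exact hp y

private lemma key_zero {h : ℝ → ℝ} (hc : Continuous h)
    (hint : ∫ t in (0:ℝ)..(2*π), h t = 0) : ∃ θ₀, h θ₀ = 0 := by
  by_contra hno
  push_neg at hno
  have hii : IntervalIntegrable h MeasureTheory.volume 0 (2*π) :=
    hc.intervalIntegrable _ _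
  have hpi : (0:ℝ) < 2*π := by positivity
  rcases lt_or_gt_of_ne (hno 0) with h0 | h0
  · have hall : ∀ t, h t < 0 := by
      intro t
      rcases lt_or_gt_of_ne (hno t) with ht | ht
      · exact ht
      · exfalso
        have hmem : (0:ℝ) ∈ Set.uIcc (h 0) (h t) :=
          Set.mem_uIcc.2 (Or.inl ⟨le_of_lt h0, le_of_lt ht⟩)
        obtain ⟨s, -, hs⟩ := intermediate_value_uIcc (hc.continuousOn) hmem
        exact hno s hs
    have hpos : (0:ℝ) < ∫ t in (0:ℝ)..(2*π), -h t :=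
      intervalIntegral_pos_of_pos (hii.neg) (fun t => by simpa using hall t) hpi
    rw [intervalIntegral.integral_neg, hint, neg_zero] at hpos
    exact lt_irrefl 0 hpos
  · have hall : ∀ t, 0 < h t := by
      intro t
      rcases lt_or_gt_of_ne (hno t) with ht | ht
      · exfalso
        have hmem : (0:ℝ) ∈ Set.uIcc (h 0) (h t) :=
          Set.mem_uIcc.2 (Or.inr ⟨le_of_lt ht, le_of_lt h0⟩)
        obtain ⟨s, -, hs⟩ := intermediate_value_uIcc (hc.continuousOn) hmem
        exact hno s hs
      · exact ht
    have hpos : (0:ℝ) < ∫ t in (0:ℝ)..(2*π), h t :=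
      intervalIntegral_pos_of_pos hii hall hpi
    rw [hint] at hpos
    exact lt_irrefl 0 hpos

private lemma key {h : ℝ → ℝ} (hd : Differentiable ℝ h)
    (hper : Function.Periodic h (2*π))
    (hint : ∫ t in (0:ℝ)..(2*π), h t = 0)
    {M : ℝ} (hM : ∀ θ, |deriv h θ| ≤ M) : ∀ θ, |h θ| ≤ 2*π*M := by
  obtain ⟨θ₀, hθ₀⟩ := key_zero hd.continuous hint
  have hpi : (0:ℝ) < 2*π := by positivity
  have hM0 : 0 ≤ M := le_trans (abs_nonneg _) (hM 0)
  intro θ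
  obtain ⟨n, hn, -⟩ := existsUnique_sub_zsmul_mem_Ico hpi θ θ₀
  set θ' := θ - n • (2*π) with hθ'
  have heq : h θ' = h θ := hper.sub_zsmul_eq n
  have hmv : |h θ' - h θ₀| ≤ M * |θ' - θ₀| := by
    have := convex_univ.norm_image_sub_le_of_norm_deriv_le (f := h)
      (fun y _ => hd y) (fun y _ => hM y) (Set.mem_univ θ₀) (Set.mem_univ θ')
    simpa [Real.norm_eq_abs] using this
  have habs : |θ' - θ₀| ≤ 2*π := by
    rw [abs_of_nonneg (by linarith [hn.1])]
    linarith [hn.2]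
  calc |h θ| = |h θ' - h θ₀| := by rw [heq, hθ₀, sub_zero]
    _ ≤ M * |θ' - θ₀| := hmv
    _ ≤ M * (2*π) := by nlinarith
    _ = 2*π*M := by ring

/-- Local-coordinate model of Lemma 6.1: if `f` is smooth, `2π`-periodic in the second
variable, and `|∂_θ^k f(x,θ)| ≤ C_k x^k` for all `k`, then `f` differs from its fibrewise
circle average by a function vanishing to infinite order at `x = 0`. -/
theorem stmt9 (f : ℝ → ℝ → ℝ) (hf : ContDiff ℝ (⊤ : ℕ∞) (Function.uncurry f))
    (hper : ∀ x θ, f x (θ + 2 * Real.pi) = f x θ)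
    (hbound : ∀ k : ℕ, ∃ C : ℝ, 0 < C ∧ ∀ x ∈ Set.Ioc (0 : ℝ) 1, ∀ θ : ℝ,
      |iteratedDeriv k (fun t => f x t) θ| ≤ C * x ^ k) :
    ∀ N : ℕ, ∃ C : ℝ, 0 < C ∧ ∀ x ∈ Set.Ioc (0 : ℝ) 1, ∀ θ : ℝ,
      |f x θ - (1 / (2 * Real.pi)) * ∫ t in (0 : ℝ)..(2 * Real.pi), f x t|
        ≤ C * x ^ N := by
  intro N
  obtain ⟨C, hC, hCb⟩ := hbound (N+1)
  have hpi : (0:ℝ) < 2*π := by positivity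
  refine ⟨(2*π)^(N+1) * C, by positivity, ?_⟩
  intro x hx θ
  -- the fibre function and its average
  set F : ℝ → ℝ := fun t => f x t with hF_def
  have hF : ContDiff ℝ (⊤ : ℕ∞) F := hf.comp (contDiff_const.prodMk contDiff_id)
  set c : ℝ := (1 / (2*π)) * ∫ t in (0:ℝ)..(2*π), F t with hc_def
  set g : ℝ → ℝ := fun t => F t - c with hg_def
  have hg : ContDiff ℝ (⊤ : ℕ∞) g := hF.sub contDiff_const
  have hperF : Function.Periodic F (2*π) := fun t => hper x t
  have hperg : Function.Periodic g (2*π) := fun t => by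
    simp only [hg_def, hperF t]
  -- smoothness of iterated derivatives
  have hgk : ∀ k : ℕ, ContDiff ℝ ((⊤ : ℕ∞) : WithTop ℕ∞) (iteratedDeriv k g) := by
    intro k
    rw [iteratedDeriv_eq_iterate]
    exact ContDiff.iterate_deriv k (hg.of_le (by simp))
  -- periodicity of iterated derivatives
  have hgkper : ∀ k : ℕ, Function.Periodic (iteratedDeriv k g) (2*π) := by
    intro k
    induction k with
    | zero => simpa using hperg
    | succ m ih =>
        rw [iteratedDeriv_succ]
        exact periodic_deriv' ih
  -- zero average of iterated derivatives
  have hgkint : ∀ k : ℕ, ∫ t in (0:ℝ)..(2*π), iteratedDeriv k g t = 0 := by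
    intro k
    cases k with
    | zero =>
        simp only [iteratedDeriv_zero, hg_def]
        rw [intervalIntegral.integral_sub (hF.continuous.intervalIntegrable (μ := MeasureTheory.volume) _ _)
          (_root_.intervalIntegrable_const (c := c))]
        rw [intervalIntegral.integral_const, hc_def, smul_eq_mul]
        have hpi' : (2*π) ≠ 0 := ne_of_gt hpi
        field_simp
        simp
    | succ m =>
        rw [iteratedDeriv_succ]
        rw [intervalIntegral.integral_deriv_eq_sub
          (fun t _ => ((hgk m).differentiable (by simp)).differentiableAt)
          (by rw [← iteratedDeriv_succ]; exact (hgk (m+1)).continuous.intervalIntegrable _ _)]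
        have := hgkper m 0
        rw [zero_add] at this
        rw [this, sub_self]
  -- the main inductive bound
  have main : ∀ j : ℕ, j ≤ N+1 → ∀ t : ℝ,
      |iteratedDeriv (N+1-j) g t| ≤ (2*π)^j * (C * x^(N+1)) := by
    intro j
    induction j with
    | zero =>
        intro _ t
        simp only [Nat.sub_zero, pow_zero, one_mul]
        have hsub : iteratedDeriv (N+1) g = iteratedDeriv (N+1) F := by
          have hdg : deriv g = deriv F := by
            funext s
            show deriv (fun t => F t - c) s = deriv F s
            exact deriv_sub_const c
          rw [iteratedDeriv_succ', iteratedDeriv_succ', hdg]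
        rw [hsub]
        exact hCb x hx t
    | succ j ih =>
        intro hj t
        have hjN : j ≤ N + 1 := le_of_lt (Nat.lt_of_succ_le hj)
        have hidx : N + 1 - j = (N + 1 - (j+1)) + 1 := by omega
        set k := N + 1 - (j+1) with hk
        have hder : ∀ s, |deriv (iteratedDeriv k g) s| ≤ (2*π)^j * (C * x^(N+1)) := by
          intro s
          have := ih hjN s
          rw [hidx, iteratedDeriv_succ] at this
          exact this
        have := key ((hgk k).differentiable (by simp)) (hgkper k) (hgkint k) hder t
        calc |iteratedDeriv k g t| ≤ 2*π*((2*π)^j * (C * x^(N+1))) := this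
          _ = (2*π)^(j+1) * (C * x^(N+1)) := by ring
  have hfinal := main (N+1) le_rfl θ
  simp only [Nat.sub_self, iteratedDeriv_zero] at hfinal
  have hxN : x^(N+1) ≤ x^N := by
    rw [pow_succ]
    nlinarith [pow_pos hx.1 N, hx.2, hx.1]
  have hgθ : g θ = f x θ - (1 / (2 * Real.pi)) * ∫ t in (0 : ℝ)..(2 * Real.pi), f x t := rfl
  rw [← hgθ]
  calc |g θ| ≤ (2*π)^(N+1) * (C * x^(N+1)) := hfinal
    _ ≤ (2*π)^(N+1) * (C * x^N) := by
        apply mul_le_mul_of_nonneg_left _ (by positivity)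
        exact mul_le_mul_of_nonneg_left hxN (le_of_lt hC)
    _ = (2*π)^(N+1) * C * x^N := by ring
end
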